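/- arXiv:math/0401025 — 2 statements merged into one kernel-verified Lean document; each statement's English description precedes it below -/
import Mathlib

section
/- Let b, c be complex numbers with b ≠ 0, let D = (1-c)^2 + 4b, and let s be a complex number with s^2 = D. Define x₊ = (c - 1 + s)/(2b) and y₋ = (1 - c - s)/2. Then x₊ · y₋ = 1 if and only if b = -(1-c)^2/4. -/
theorem stmt_1 (b c s : ℂ) (hb : b ≠ 0) (hs : s ^ 2 = (1 - c) ^ 2 + 4 * b) :
    ((c - 1 + s) / (2 * b)) * ((1 - c - s) / 2) = 1 ↔ b = -(1 - c) ^ 2 / 4 := by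
  constructor
  · intro h
    rw [div_mul_div_comm, div_eq_one_iff_eq (by simpa using hb)] at h
    have key : s * (s - (1 - c)) = 0 := by linear_combination (-1/2 : ℂ) * h + (1/2 : ℂ) * hs
    rcases mul_eq_zero.mp key with h0 | h1
    · subst h0
      linear_combination (-1/4 : ℂ) * hs
    · have hse : s = 1 - c := sub_eq_zero.mp h1
      rw [hse] at hs
      exact absurd (by linear_combination (-1/4 : ℂ) * hs) hb
  · intro h
    have hs0 : s = 0 := pow_eq_zero_iff (n := 2) (by norm_num) |>.mp (by rw [hs, h]; ring)
    subst hs0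
    rw [div_mul_div_comm, div_eq_one_iff_eq (by simpa using hb)]
    linear_combination (-4 : ℂ) * h
end

section
/- Let c ∈ ℂ with c ≠ 1 and 4b = -(1-c)² with c ≠ -1, and set M = [[1, b], [1, c]]. Then M has the unique eigenvalue (1+c)/2, this eigenvalue is nonzero, and M is not diagonalizable; consequently there exist g ∈ GL₂(ℂ) and q ≠ 0 such that q·g⁻¹·M·g = [[1,1],[0,1]]. -/
/-!
With μ = (1 + c)/2, the matrix M has trace 2μ and, because 4b = -(1 - c)², determinant μ², so
its characteristic polynomial is (X - μ)². A matrix conjugate to a diagonal one with spectrum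
{μ} is the scalar μ, which M is not (its lower-left entry is 1). In the basis
((M - μ)e₀, μe₀) the matrix M becomes μ·[[1, 1], [0, 1]], and μ ≠ 0 since c ≠ -1.
-/

open Polynomial

namespace Matrix

variable {K : Type*} [Field K]

theorem spectrum_eq_singleton_of_trace_of_det_fin_two {M : Matrix (Fin 2) (Fin 2) K} {μ : K}
    (htr : M.trace = 2 * μ) (hdet : M.det = μ ^ 2) : spectrum K M = {μ} := by
  have hchar : M.charpoly = (X - C μ) ^ 2 := by
    rw [charpoly_fin_two, htr, hdet, C_mul, C_pow, map_ofNat]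
    ring
  ext x
  rw [mem_spectrum_iff_isRoot_charpoly, hchar, Set.mem_singleton_iff, IsRoot, eval_pow,
    eval_sub, eval_X, eval_C, pow_eq_zero_iff two_ne_zero, sub_eq_zero]

theorem eq_algebraMap_of_conj_eq_diagonal {n : Type*} [Fintype n] [DecidableEq n]
    {M : Matrix n n K} {μ : K} (hM : spectrum K M = {μ}) {g : GL n K} {d : n → K}
    (h : (↑g⁻¹ : Matrix n n K) * M * g = diagonal d) : M = algebraMap K _ μ := by
  have hd : d = fun _ => μ := by
    have hrange : Set.range d = {μ} := by
      rw [← spectrum_diagonal, ← h, spectrum.units_conjugate', hM]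
    funext i
    exact hrange.subset (Set.mem_range_self i)
  have hdiag : diagonal d = algebraMap K _ μ := by
    rw [hd, algebraMap_eq_diagonal]
    rfl
  calc M = g * ((↑g⁻¹ : Matrix n n K) * M * g) * (↑g⁻¹ : Matrix n n K) := by
        simp [mul_assoc]
    _ = algebraMap K _ μ := by rw [h, hdiag, ← Algebra.commutes, mul_assoc]; simp

theorem exists_conj_eq_smul_jordan_fin_two {M : Matrix (Fin 2) (Fin 2) K} {μ : K} (hμ : μ ≠ 0)
    (h10 : M 1 0 ≠ 0) (htr : M.trace = 2 * μ) (hdet : M.det = μ ^ 2) :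
    ∃ g : GL (Fin 2) K,
      (↑g⁻¹ : Matrix (Fin 2) (Fin 2) K) * M * (g : Matrix (Fin 2) (Fin 2) K) =
        μ • !![1, 1; 0, 1] := by
  rw [trace_fin_two] at htr
  rw [det_fin_two] at hdet
  -- the columns are `(M - μ) e₀` and `μ e₀`
  let A : Matrix (Fin 2) (Fin 2) K := !![M 0 0 - μ, μ; M 1 0, 0]
  have hA : A.det ≠ 0 := by simpa [A, det_fin_two] using mul_ne_zero hμ h10
  have hMA : M * A = A * μ • !![1, 1; 0, 1] := by
    ext i j
    fin_cases i <;> fin_cases j <;>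
      simp only [A, mul_apply, Fin.sum_univ_two, smul_apply, smul_eq_mul, of_apply, cons_val',
        cons_val_zero, cons_val_one, cons_val_fin_one, Fin.zero_eta, Fin.mk_one, Fin.isValue]
    · linear_combination M 0 0 * htr - hdet
    · ring
    · linear_combination M 1 0 * htr
    · ring
  let g := GeneralLinearGroup.mkOfDetNeZero A hA
  have hMg : M * (g : Matrix (Fin 2) (Fin 2) K) =
      g * (μ • !![1, 1; 0, 1] : Matrix (Fin 2) (Fin 2) K) := hMA
  exact ⟨g, by rw [mul_assoc, hMg, ← mul_assoc, Units.inv_mul, one_mul]⟩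

end Matrix

theorem stmt_19_general (b c : ℂ) (hcm1 : c ≠ -1) (hb : 4 * b = -(1 - c) ^ 2) :
    spectrum ℂ (!![1, b; 1, c] : Matrix (Fin 2) (Fin 2) ℂ) = {(1 + c) / 2} ∧
    (1 + c) / 2 ≠ 0 ∧
    (¬ ∃ g : GL (Fin 2) ℂ, ∃ d : Fin 2 → ℂ,
      (↑g⁻¹ : Matrix (Fin 2) (Fin 2) ℂ) * !![1, b; 1, c] * (↑g : Matrix (Fin 2) (Fin 2) ℂ) = Matrix.diagonal d) ∧
    (∃ g : GL (Fin 2) ℂ, ∃ q : ℂ, q ≠ 0 ∧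
      q • ((↑g⁻¹ : Matrix (Fin 2) (Fin 2) ℂ) * !![1, b; 1, c] * (↑g : Matrix (Fin 2) (Fin 2) ℂ)) = !![1, 1; 0, 1]) := by
  have htr : (!![1, b; 1, c] : Matrix (Fin 2) (Fin 2) ℂ).trace = 2 * ((1 + c) / 2) := by
    rw [Matrix.trace_fin_two_of]
    ring
  have hdet : (!![1, b; 1, c] : Matrix (Fin 2) (Fin 2) ℂ).det = ((1 + c) / 2) ^ 2 := by
    rw [Matrix.det_fin_two_of]
    linear_combination -hb / 4
  have hμ : (1 + c) / 2 ≠ 0 := div_ne_zero (fun h => hcm1 (by linear_combination h)) two_ne_zero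
  have hspec := Matrix.spectrum_eq_singleton_of_trace_of_det_fin_two htr hdet
  refine ⟨hspec, hμ, ?_, ?_⟩
  · rintro ⟨g, d, hgd⟩
    have hscalar := Matrix.eq_algebraMap_of_conj_eq_diagonal hspec hgd
    simpa [Matrix.algebraMap_matrix_apply] using congr_fun₂ hscalar 1 0
  · obtain ⟨g, hg⟩ := Matrix.exists_conj_eq_smul_jordan_fin_two hμ (by simp) htr hdet
    refine ⟨g, ((1 + c) / 2)⁻¹, inv_ne_zero hμ, ?_⟩
    rw [hg, smul_smul, inv_mul_cancel₀ hμ, one_smul]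

theorem stmt_19 (b c : ℂ) (hc1 : c ≠ 1) (hcm1 : c ≠ -1) (hb : 4 * b = -(1 - c) ^ 2) :
    spectrum ℂ (!![1, b; 1, c] : Matrix (Fin 2) (Fin 2) ℂ) = {(1 + c) / 2} ∧
    (1 + c) / 2 ≠ 0 ∧
    (¬ ∃ g : GL (Fin 2) ℂ, ∃ d : Fin 2 → ℂ,
      (↑g⁻¹ : Matrix (Fin 2) (Fin 2) ℂ) * !![1, b; 1, c] * (↑g : Matrix (Fin 2) (Fin 2) ℂ) = Matrix.diagonal d) ∧
    (∃ g : GL (Fin 2) ℂ, ∃ q : ℂ, q ≠ 0 ∧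
      q • ((↑g⁻¹ : Matrix (Fin 2) (Fin 2) ℂ) * !![1, b; 1, c] * (↑g : Matrix (Fin 2) (Fin 2) ℂ)) = !![1, 1; 0, 1]) :=
  stmt_19_general b c hcm1 hb
end
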